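/- Let L be β-smooth, ω' = ω - η(∇L(ω) + δ) with 0 < η ≤ 1/β, and suppose |⟨∇L(ω), δ⟩| ≤ a²‖∇L(ω)‖² for some a ∈ [0, 1/2) and ‖δ‖² ≤ σ². Then L(ω') ≤ L(ω) + (β η² σ²)/2 - η·(1 - a² - β η (1/2 - a²))·‖∇L(ω)‖². -/

import Mathlib

/-! Along the segment from `x` to `y`, the slope of `t ↦ L (x + t • (y - x))` exceeds its value at
`t = 0` by at most `β t ‖y - x‖²`, since the gradient is `β`-Lipschitz; integrating over `[0, 1]`
gives the descent lemma `L y ≤ L x + ⟪∇L x, y - x⟫ + β/2 ‖y - x‖²`. For the step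
`y = ω - η (∇L ω + δ)` the cross term `⟪∇L ω, δ⟫` enters with the coefficient `-η (1 - β η) ≤ 0`,
so the bias bound `⟪∇L ω, δ⟫ ≥ -a² ‖∇L ω‖²` and `‖δ‖² ≤ σ²` finish the estimate. -/

open scoped RealInnerProductSpace

section DescentLemma

variable {F : Type*} [NormedAddCommGroup F] [InnerProductSpace ℝ F] [CompleteSpace F]
  {L : F → ℝ} {β : ℝ}

theorem hasDerivAt_comp_add_smul (hL : Differentiable ℝ L) (x v : F) (t : ℝ) :
    HasDerivAt (fun s : ℝ => L (x + s • v)) ⟪gradient L (x + t • v), v⟫ t := by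
  have hline : HasDerivAt (fun s : ℝ => x + s • v) v t := by
    simpa using ((hasDerivAt_id t).smul_const v).const_add x
  simpa [InnerProductSpace.toDual_apply_apply, Function.comp_def] using
    (hL (x + t • v)).hasGradientAt.hasFDerivAt.comp_hasDerivAt t hline

theorem inner_gradient_add_smul_sub_le
    (hsmooth : ∀ x y, ‖gradient L x - gradient L y‖ ≤ β * ‖x - y‖)
    (x v : F) {t : ℝ} (ht : 0 ≤ t) :
    ⟪gradient L (x + t • v) - gradient L x, v⟫ ≤ β * t * ‖v‖ ^ 2 :=
  calc ⟪gradient L (x + t • v) - gradient L x, v⟫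
      ≤ ‖gradient L (x + t • v) - gradient L x‖ * ‖v‖ := real_inner_le_norm _ _
    _ ≤ β * ‖x + t • v - x‖ * ‖v‖ := by gcongr; exact hsmooth _ _
    _ = β * t * ‖v‖ ^ 2 := by
        rw [add_sub_cancel_left, norm_smul, Real.norm_of_nonneg ht]; ring

theorem le_add_inner_gradient_add_norm_sq (hL : Differentiable ℝ L)
    (hsmooth : ∀ x y, ‖gradient L x - gradient L y‖ ≤ β * ‖x - y‖) (x y : F) :
    L y ≤ L x + ⟪gradient L x, y - x⟫ + β / 2 * ‖y - x‖ ^ 2 := by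
  set v := y - x
  let g : ℝ → ℝ := fun t => L (x + t • v) - t * ⟪gradient L x, v⟫ - β / 2 * t ^ 2 * ‖v‖ ^ 2
  have hg : ∀ t, HasDerivAt g
      (⟪gradient L (x + t • v), v⟫ - ⟪gradient L x, v⟫ - β * t * ‖v‖ ^ 2) t := fun t =>
    (((hasDerivAt_comp_add_smul hL x v t).sub ((hasDerivAt_id t).mul_const _)).sub
      (((hasDerivAt_pow 2 t).const_mul (β / 2)).mul_const (‖v‖ ^ 2))).congr_deriv
      (by push_cast; ring)
  have hg_anti : AntitoneOn g (Set.Icc 0 1) := by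
    refine antitoneOn_of_deriv_nonpos (convex_Icc 0 1)
      (fun t _ => (hg t).continuousAt.continuousWithinAt)
      (fun t _ => (hg t).differentiableAt.differentiableWithinAt) fun t ht => ?_
    rw [interior_Icc] at ht
    rw [(hg t).deriv, ← inner_sub_left]
    linarith [inner_gradient_add_smul_sub_le hsmooth x v ht.1.le]
  have hg01 :=
    hg_anti (Set.left_mem_Icc.2 zero_le_one) (Set.right_mem_Icc.2 zero_le_one) zero_le_one
  simp only [g, zero_smul, add_zero, one_smul, zero_mul, sub_zero, one_mul,
    zero_pow two_ne_zero, mul_zero, one_pow, mul_one, v, add_sub_cancel] at hg01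
  linarith

end DescentLemma

theorem perturbed_descent_bounded_general {d : ℕ} (L : EuclideanSpace ℝ (Fin d) → ℝ) (β : ℝ)
    (hdiff : Differentiable ℝ L)
    (hsmooth : ∀ x y, ‖gradient L x - gradient L y‖ ≤ β * ‖x - y‖)
    (ω δ : EuclideanSpace ℝ (Fin d)) (η a σ : ℝ)
    (hη : 0 < η) (hηβ : η ≤ 1 / β)
    (hbias : |⟪gradient L ω, δ⟫| ≤ a ^ 2 * ‖gradient L ω‖ ^ 2)
    (hvar : ‖δ‖ ^ 2 ≤ σ ^ 2) :
    L (ω - η • (gradient L ω + δ)) ≤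
      L ω + (β * η ^ 2 * σ ^ 2) / 2
        - η * (1 - a ^ 2 - β * η * (1 / 2 - a ^ 2)) * ‖gradient L ω‖ ^ 2 := by
  set g := gradient L ω
  have hβ : 0 < β := one_div_pos.1 (hη.trans_le hηβ)
  have hβη : β * η ≤ 1 := by rwa [le_div_iff₀ hβ, mul_comm] at hηβ
  have hdescent := le_add_inner_gradient_add_norm_sq hdiff hsmooth ω (ω - η • (g + δ))
  rw [sub_sub_cancel_left, inner_neg_right, inner_smul_right, inner_add_right,
    real_inner_self_eq_norm_sq, norm_neg, norm_smul, mul_pow, Real.norm_eq_abs, sq_abs,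
    norm_add_sq_real] at hdescent
  have hcross : 0 ≤ η * (1 - β * η) * (⟪g, δ⟫ + a ^ 2 * ‖g‖ ^ 2) :=
    mul_nonneg (mul_nonneg hη.le (sub_nonneg.2 hβη)) (by linarith [(abs_le.1 hbias).1])
  have hnoise : 0 ≤ β * η ^ 2 * (σ ^ 2 - ‖δ‖ ^ 2) := by
    have := sub_nonneg.2 hvar
    positivity
  linarith

/-- Descent inequality with bounded-bias and bounded-variance gradient error. -/
theorem perturbed_descent_bounded {d : ℕ} (L : EuclideanSpace ℝ (Fin d) → ℝ) (β : ℝ)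
    (hdiff : Differentiable ℝ L)
    (hsmooth : ∀ x y, ‖gradient L x - gradient L y‖ ≤ β * ‖x - y‖)
    (ω δ : EuclideanSpace ℝ (Fin d)) (η a σ : ℝ)
    (hη : 0 < η) (hηβ : η ≤ 1 / β)
    (ha0 : 0 ≤ a) (ha : a < 1 / 2)
    (hbias : |⟪gradient L ω, δ⟫| ≤ a ^ 2 * ‖gradient L ω‖ ^ 2)
    (hvar : ‖δ‖ ^ 2 ≤ σ ^ 2) :
    L (ω - η • (gradient L ω + δ)) ≤
      L ω + (β * η ^ 2 * σ ^ 2) / 2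
        - η * (1 - a ^ 2 - β * η * (1 / 2 - a ^ 2)) * ‖gradient L ω‖ ^ 2 :=
  perturbed_descent_bounded_general L β hdiff hsmooth ω δ η a σ hη hηβ hbias hvar
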